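/- arXiv:2110.01797 — 2 statements merged into one kernel-verified Lean document; each statement's English description precedes it below -/
import Mathlib

section
/- Let T>0, 0<α<1, p>1, A,B≥0, and let v∈C^1([0,T),ℝ) satisfy the fractional differential inequality ᶜD^α_{0|t} v(t) ≥ B(|v(t)|^p − A) for all t∈[0,T), with initial condition v(0) > A^{1/p}. Then v(t) ≥ A^{1/p} for all t∈[0,T). -/
open Real MeasureTheory

/-- Left-sided Caputo fractional derivative of order `α`:
`ᶜD^α_{0|t} f(t) = (1/Γ(1-α)) ∫_0^t (t-s)^(-α) f'(s) ds`. -/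
noncomputable def caputoLeft (α : ℝ) (f : ℝ → ℝ) (t : ℝ) : ℝ :=
  (1 / Real.Gamma (1 - α)) * ∫ s in (0:ℝ)..t, (t - s) ^ (-α) * deriv f s

/-!
Suppose `v` drops below `c = A ^ (1 / p)` and let `t₁` be the first time it reaches `c`. Then
`|v t₁| ^ p = A`, so the hypothesis gives `ᶜD^α v(t₁) ≥ 0`. But `t₁` is a minimum of `v` on
`[0, t₁]` with `v t₁ < v 0`, and at such a point the Caputo derivative is negative: for
`g s = (v s - v t₁) (t₁ - s) ^ (-α)` one has
`g' s - (t₁ - s) ^ (-α) v' s = α (v s - v t₁) (t₁ - s) ^ (-α - 1) ≥ 0`, hence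
`∫₀^{t₁} (t₁ - s) ^ (-α) v' s ds ≤ lim_{s → t₁⁻} g s - g 0 = -t₁ ^ (-α) (v 0 - v t₁) < 0`,
the limit vanishing because `v s - v t₁ = O(t₁ - s)` and `α < 1`.
-/

open Set Filter Topology

lemma tendsto_sub_mul_rpow_neg_nhdsLT {v : ℝ → ℝ} {v' t α : ℝ} (hα : α < 1)
    (hv : HasDerivWithinAt v v' (Iio t) t) :
    Tendsto (fun s => (v s - v t) * (t - s) ^ (-α)) (𝓝[<] t) (𝓝 0) := by
  have hslope : Tendsto (slope v t) (𝓝[<] t) (𝓝 v') :=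
    (hasDerivWithinAt_iff_tendsto_slope' (self_notMem_Iio (a := t))).1 hv
  have hpow : Tendsto (fun s => (t - s) ^ (1 - α)) (𝓝[<] t) (𝓝 0) := by
    have hcont : ContinuousAt (fun s : ℝ => (t - s) ^ (1 - α)) t :=
      (continuousAt_const.sub continuousAt_id).rpow_const (Or.inr (by linarith))
    simpa [Real.zero_rpow (by linarith : 1 - α ≠ 0)] using
      hcont.tendsto.mono_left nhdsWithin_le_nhds
  have key := (hslope.mul hpow).neg
  rw [mul_zero, neg_zero] at key
  refine key.congr' ?_
  filter_upwards [self_mem_nhdsWithin] with s (hs : s < t)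
  have hts : 0 < t - s := sub_pos.2 hs
  have hst : s - t ≠ 0 := by linarith
  rw [slope_def_field, show (1 : ℝ) - α = 1 + -α by ring, Real.rpow_add hts, Real.rpow_one]
  field_simp
  ring

lemma intervalIntegrable_rpow_neg_mul {g : ℝ → ℝ} {a t α : ℝ} (hα : α < 1)
    (hg : ContinuousOn g (uIcc a t)) :
    IntervalIntegrable (fun s => (t - s) ^ (-α) * g s) volume a t := by
  have hpow : IntervalIntegrable (fun s : ℝ => s ^ (-α)) volume (t - a) 0 :=
    intervalIntegral.intervalIntegrable_rpow' (by linarith)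
  have hshift : IntervalIntegrable (fun s => (t - s) ^ (-α)) volume a t := by
    simpa using hpow.comp_sub_left t
  exact hshift.mul_continuousOn hg

lemma integral_rpow_neg_mul_le_of_isMinOn {v v' : ℝ → ℝ} {t α : ℝ} (hα : 0 ≤ α) (ht : 0 < t)
    (hcont : ContinuousOn v (Icc 0 t)) (hderiv : ∀ s ∈ Ioo 0 t, HasDerivAt v (v' s) s)
    (hint : IntervalIntegrable (fun s => (t - s) ^ (-α) * v' s) volume 0 t)
    (hmin : IsMinOn v (Icc 0 t) t)
    (hlim : Tendsto (fun s => (v s - v t) * (t - s) ^ (-α)) (𝓝[<] t) (𝓝 0)) :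
    ∫ s in 0..t, (t - s) ^ (-α) * v' s ≤ -(t ^ (-α) * (v 0 - v t)) := by
  set g : ℝ → ℝ := fun s => (v s - v t) * (t - s) ^ (-α)
  have hstep : ∀ x ∈ Ioo 0 t, ∫ s in 0..x, (t - s) ^ (-α) * v' s ≤ g x - g 0 := by
    intro x ⟨hx0, hxt⟩
    refine intervalIntegral.integral_le_sub_of_hasDeriv_right_of_le (g' := fun y =>
        (t - y) ^ (-α) * v' y + α * (v y - v t) * (t - y) ^ (-α - 1)) hx0.le ?_ ?_ ?_ ?_
    · exact ((hcont.mono (Icc_subset_Icc_right hxt.le)).sub continuousOn_const).mul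
        ((continuous_sub_left t).continuousOn.rpow_const fun y hy => Or.inl (by
          linarith [hy.2]))
    · intro y hy
      have hty : t - y ≠ 0 := by linarith [hy.2]
      have hpow := ((hasDerivAt_id y).const_sub t).rpow_const (p := -α) (Or.inl hty)
      refine ((((hderiv y ⟨hy.1, hy.2.trans hxt⟩).sub_const (v t)).mul hpow).congr_deriv
        ?_).hasDerivWithinAt
      simp only [id]
      ring
    · exact (intervalIntegrable_iff_integrableOn_Icc_of_le hx0.le).1
        (hint.mono_set (uIcc_subset_uIcc left_mem_uIcc
          (mem_uIcc_of_le hx0.le hxt.le)))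
    · intro y hy
      have hvy : v t ≤ v y := isMinOn_iff.1 hmin y ⟨hy.1.le, (hy.2.trans hxt).le⟩
      have hgap : 0 ≤ α * (v y - v t) * (t - y) ^ (-α - 1) :=
        mul_nonneg (mul_nonneg hα (sub_nonneg.2 hvy)) (rpow_nonneg (by linarith [hy.2]) _)
      linarith
  have hprim : Tendsto (fun x => ∫ s in 0..x, (t - s) ^ (-α) * v' s) (𝓝[<] t)
      (𝓝 (∫ s in 0..t, (t - s) ^ (-α) * v' s)) := by
    refine ((intervalIntegral.continuousOn_primitive_interval' hint left_mem_uIcc) t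
      right_mem_uIcc).tendsto.mono_left (nhdsWithin_le_of_mem ?_)
    rw [uIcc_of_le ht.le]
    exact Icc_mem_nhdsLT ht
  have hbound := le_of_tendsto_of_tendsto hprim (hlim.sub_const (g 0))
    (eventually_of_mem (Ioo_mem_nhdsLT ht) hstep)
  simpa [g, mul_comm] using hbound

lemma caputoLeft_neg_of_isMinOn {v : ℝ → ℝ} {T α t : ℝ} (hα0 : 0 < α) (hα1 : α < 1)
    (hv : ContDiffOn ℝ 1 v (Ico 0 T)) (ht : t ∈ Ioo 0 T) (hmin : IsMinOn v (Icc 0 t) t)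
    (hlt : v t < v 0) : caputoLeft α v t < 0 := by
  have hIcc : Icc 0 t ⊆ Ico 0 T := Icc_subset_Ico_right ht.2
  have hderiv : ∀ s ∈ Ioo 0 T, HasDerivAt v (deriv v s) s := fun s hs =>
    ((hv.differentiableOn one_ne_zero).differentiableAt
      (mem_of_superset (isOpen_Ioo.mem_nhds hs) Ioo_subset_Ico_self)).hasDerivAt
  have hint : IntervalIntegrable (fun s => (t - s) ^ (-α) * deriv v s) volume 0 t := by
    have hcont : ContinuousOn (derivWithin v (Ico 0 T)) (uIcc 0 t) := by
      rw [uIcc_of_le ht.1.le]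
      exact (hv.continuousOn_derivWithin (uniqueDiffOn_Ico 0 T) le_rfl).mono hIcc
    refine (intervalIntegrable_rpow_neg_mul hα1 hcont).congr_uIoo fun s hs => ?_
    rw [uIoo_of_le ht.1.le] at hs
    simp only [((hderiv s ⟨hs.1, hs.2.trans ht.2⟩).hasDerivWithinAt).derivWithin
      (uniqueDiffOn_Ico 0 T s ⟨hs.1.le, hs.2.trans ht.2⟩)]
  have hbound := integral_rpow_neg_mul_le_of_isMinOn hα0.le ht.1 (hv.continuousOn.mono hIcc)
    (fun s hs => hderiv s ⟨hs.1, hs.2.trans ht.2⟩) hint hmin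
    (tendsto_sub_mul_rpow_neg_nhdsLT hα1 (hderiv t ht).hasDerivWithinAt)
  have hgap : 0 < t ^ (-α) * (v 0 - v t) := mul_pos (rpow_pos_of_pos ht.1 _) (sub_pos.2 hlt)
  have hΓ : 0 < 1 / Gamma (1 - α) := one_div_pos.2 (Gamma_pos_of_pos (sub_pos.2 hα1))
  exact mul_neg_of_pos_of_neg hΓ (by linarith)

lemma exists_first_hitting {v : ℝ → ℝ} {t c : ℝ} (ht : 0 ≤ t)
    (hv : ContinuousOn v (Icc 0 t)) (h0 : c < v 0) (hct : v t ≤ c) :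
    ∃ t₁ ∈ Ioc 0 t, v t₁ = c ∧ IsMinOn v (Icc 0 t₁) t₁ := by
  set K := Icc 0 t ∩ v ⁻¹' Iic c
  have hK : IsClosed K := hv.preimage_isClosed_of_isClosed isClosed_Icc isClosed_Iic
  have hKbdd : BddBelow K := ⟨0, fun x hx => hx.1.1⟩
  have ht₁K : sInf K ∈ K := hK.csInf_mem ⟨t, ⟨ht, le_rfl⟩, hct⟩ hKbdd
  obtain ⟨⟨ht₁0, ht₁t⟩, hvt₁⟩ := ht₁K
  have hbefore : ∀ s ∈ Ico 0 (sInf K), c < v s := fun s hs => lt_of_not_ge fun hs' =>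
    (csInf_le hKbdd ⟨⟨hs.1, hs.2.le.trans ht₁t⟩, hs'⟩).not_gt hs.2
  have ht₁pos : 0 < sInf K := ht₁0.lt_of_ne fun h => (h ▸ hvt₁ : v 0 ≤ c).not_gt h0
  have hhit : v (sInf K) = c := by
    refine le_antisymm hvt₁ (not_lt.1 fun hlt => ?_)
    obtain ⟨s, hs, hvs⟩ :=
      intermediate_value_Icc' ht₁0 (hv.mono (Icc_subset_Icc_right ht₁t)) ⟨hlt.le, h0.le⟩
    exact (hbefore s ⟨hs.1, hs.2.lt_of_ne fun h => by rw [h] at hvs; linarith⟩).ne' hvs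
  refine ⟨sInf K, ⟨ht₁pos, ht₁t⟩, hhit, isMinOn_iff.2 fun s hs => ?_⟩
  rcases hs.2.eq_or_lt with heq | hlt
  · rw [heq]
  · exact hhit ▸ (hbefore s ⟨hs.1, hlt⟩).le

theorem stmt5_general (T α p A B : ℝ) (hα0 : 0 < α) (hα1 : α < 1) (hp : 1 < p)
    (hA : 0 ≤ A) (v : ℝ → ℝ)
    (hv : ContDiffOn ℝ 1 v (Set.Ico 0 T))
    (hineq : ∀ t ∈ Set.Ico (0:ℝ) T, B * (|v t| ^ p - A) ≤ caputoLeft α v t)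
    (hv0 : A ^ (1 / p) < v 0) :
    ∀ t ∈ Set.Ico (0:ℝ) T, A ^ (1 / p) ≤ v t := by
  intro t ht
  by_contra! hvt
  obtain ⟨t₁, ⟨ht₁0, ht₁t⟩, hvt₁, hmin⟩ := exists_first_hitting ht.1
    (hv.continuousOn.mono (Icc_subset_Ico_right ht.2)) hv0 hvt.le
  have ht₁ : t₁ ∈ Ioo 0 T := ⟨ht₁0, ht₁t.trans_lt ht.2⟩
  have hnonlin : |v t₁| ^ p - A = 0 := by
    rw [hvt₁, abs_of_nonneg (rpow_nonneg hA _), one_div, rpow_inv_rpow hA (by linarith),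
      sub_self]
  have hcaputo := hineq t₁ (Ioo_subset_Ico_self ht₁)
  rw [hnonlin, mul_zero] at hcaputo
  exact hcaputo.not_gt (caputoLeft_neg_of_isMinOn hα0 hα1 hv ht₁ hmin (hvt₁ ▸ hv0))

theorem stmt5 (T α p A B : ℝ) (hT : 0 < T) (hα0 : 0 < α) (hα1 : α < 1) (hp : 1 < p)
    (hA : 0 ≤ A) (hB : 0 ≤ B) (v : ℝ → ℝ)
    (hv : ContDiffOn ℝ 1 v (Set.Ico 0 T))
    (hineq : ∀ t ∈ Set.Ico (0:ℝ) T, B * (|v t| ^ p - A) ≤ caputoLeft α v t)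
    (hv0 : A ^ (1 / p) < v 0) :
    ∀ t ∈ Set.Ico (0:ℝ) T, A ^ (1 / p) ≤ v t :=
  stmt5_general T α p A B hα0 hα1 hp hA v hv hineq hv0
end

section
/- Let s∈(0,1), N≥1, p>1, R>0, and N<q≤N+2s. Let φ(x)=(1+|x|²)^{−q/2} and φ_R(x)=φ(x/R). Assuming the pointwise bound |(−Δ)^s φ(x)| ≤ C_{N,q} φ(x) for all x∈ℝ^N, one has ∫_{ℝ^N} φ_R(x)^{−1/(p−1)} |(−Δ)^s φ_R(x)|^{p/(p−1)} dx ≤ C_{N,q}^{p/(p−1)} A₀ R^{−2sp/(p−1)+N}, where A₀ = ∫_{ℝ^N} φ(x) dx. -/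
open Real MeasureTheory

/-- The profile `φ(x) = ⟨x⟩^(−q) = (1+|x|²)^(−q/2)`. -/
noncomputable def phiProfile (N : ℕ) (q : ℝ) (x : EuclideanSpace ℝ (Fin N)) : ℝ :=
  (1 + ‖x‖ ^ 2) ^ (-(q / 2))

/-- With `Λ = (−Δ)^s φ` satisfying the pointwise bound `|Λ| ≤ C_{N,q} φ`, and using the
scaling `(−Δ)^s φ_R(x) = R^(−2s) Λ(x/R)` for `φ_R(x) = φ(x/R)`, one has
`∫ φ_R^(−1/(p−1)) |(−Δ)^s φ_R|^(p/(p−1)) ≤ C_{N,q}^(p/(p−1)) A₀ R^(−2sp/(p−1)+N)`. -/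
theorem stmt8 (N : ℕ) (hN : 1 ≤ N) (s p R q CNq : ℝ)
    (hs : s ∈ Set.Ioo (0:ℝ) 1) (hp : 1 < p) (hR : 0 < R)
    (hq1 : (N:ℝ) < q) (hq2 : q ≤ N + 2 * s)
    (Λ : EuclideanSpace ℝ (Fin N) → ℝ)
    (hΛ : ∀ x, |Λ x| ≤ CNq * phiProfile N q x) :
    (∫ x, (phiProfile N q (R⁻¹ • x)) ^ (-(1 / (p - 1))) *
        |R ^ (-(2 * s)) * Λ (R⁻¹ • x)| ^ (p / (p - 1)))
      ≤ CNq ^ (p / (p - 1)) * (∫ x, phiProfile N q x) *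
          R ^ (-(2 * s * p) / (p - 1) + N) := by
  obtain ⟨hs0, _⟩ := hs
  have hp1 : (0:ℝ) < p - 1 := by linarith
  set p' := p / (p - 1) with hp'
  have hp'pos : 0 < p' := by positivity
  have hφpos : ∀ y : EuclideanSpace ℝ (Fin N), 0 < phiProfile N q y := fun y => by
    unfold phiProfile; positivity
  have hC : 0 ≤ CNq := by
    have h := hΛ 0
    have h0 : phiProfile N q 0 = 1 := by simp [phiProfile]
    rw [h0, mul_one] at h
    exact le_trans (abs_nonneg _) h
  have hRs : (0:ℝ) < R ^ (-(2 * s)) := rpow_pos_of_pos hR _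
  have hfin : Module.finrank ℝ (EuclideanSpace ℝ (Fin N)) = N := by
    simp [finrank_euclideanSpace]
  -- integrability of φ
  have hφint : Integrable (fun y : EuclideanSpace ℝ (Fin N) => phiProfile N q y) := by
    have := integrable_rpow_neg_one_add_norm_sq (E := EuclideanSpace ℝ (Fin N))
      (μ := volume) (r := q) (by rw [hfin]; exact hq1)
    simpa [phiProfile, neg_div] using this
  have hφRint : Integrable (fun x : EuclideanSpace ℝ (Fin N) => phiProfile N q (R⁻¹ • x)) :=
    hφint.comp_smul (inv_ne_zero hR.ne')
  -- pointwise bound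
  have hpt : ∀ x : EuclideanSpace ℝ (Fin N),
      (phiProfile N q (R⁻¹ • x)) ^ (-(1 / (p - 1))) *
        |R ^ (-(2 * s)) * Λ (R⁻¹ • x)| ^ p'
      ≤ CNq ^ p' * (R ^ (-(2 * s))) ^ p' * phiProfile N q (R⁻¹ • x) := by
    intro x
    set y := R⁻¹ • x
    have habs : |R ^ (-(2 * s)) * Λ y| ≤ R ^ (-(2 * s)) * (CNq * phiProfile N q y) := by
      rw [abs_mul, abs_of_pos hRs]
      exact mul_le_mul_of_nonneg_left (hΛ y) hRs.le
    have h1 : |R ^ (-(2 * s)) * Λ y| ^ p'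
        ≤ (R ^ (-(2 * s)) * (CNq * phiProfile N q y)) ^ p' :=
      rpow_le_rpow (abs_nonneg _) habs hp'pos.le
    have h2 : (R ^ (-(2 * s)) * (CNq * phiProfile N q y)) ^ p'
        = (R ^ (-(2 * s))) ^ p' * (CNq ^ p' * phiProfile N q y ^ p') := by
      rw [mul_rpow hRs.le (mul_nonneg hC (hφpos y).le), mul_rpow hC (hφpos y).le]
    calc (phiProfile N q y) ^ (-(1 / (p - 1))) * |R ^ (-(2 * s)) * Λ y| ^ p'
        ≤ (phiProfile N q y) ^ (-(1 / (p - 1))) *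
            ((R ^ (-(2 * s))) ^ p' * (CNq ^ p' * phiProfile N q y ^ p')) := by
          refine mul_le_mul_of_nonneg_left ?_ (rpow_nonneg (hφpos y).le _)
          rw [← h2]; exact h1
      _ = CNq ^ p' * (R ^ (-(2 * s))) ^ p' *
            ((phiProfile N q y) ^ (-(1 / (p - 1))) * phiProfile N q y ^ p') := by ring
      _ = CNq ^ p' * (R ^ (-(2 * s))) ^ p' * phiProfile N q y := by
          rw [← rpow_add (hφpos y)]
          congr 1
          have : -(1 / (p - 1)) + p' = 1 := by
            rw [hp']; field_simp; all_goals ring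
          rw [this, rpow_one]
  -- integrate
  have hmono : (∫ x, (phiProfile N q (R⁻¹ • x)) ^ (-(1 / (p - 1))) *
        |R ^ (-(2 * s)) * Λ (R⁻¹ • x)| ^ p')
      ≤ ∫ x, CNq ^ p' * (R ^ (-(2 * s))) ^ p' * phiProfile N q (R⁻¹ • x) := by
    refine integral_mono_of_nonneg ?_ ((hφRint.const_mul _)) ?_
    · filter_upwards with x
      exact mul_nonneg (rpow_nonneg (hφpos _).le _) (rpow_nonneg (abs_nonneg _) _)
    · filter_upwards with x using hpt x
  refine hmono.trans_eq ?_
  rw [integral_const_mul, Measure.integral_comp_inv_smul_of_nonneg volume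
    (fun y => phiProfile N q y) hR.le, hfin, smul_eq_mul]
  have hRpow : (R ^ (-(2 * s))) ^ p' * (R ^ N : ℝ) = R ^ (-(2 * s * p) / (p - 1) + N) := by
    rw [← rpow_natCast R N, ← rpow_mul hR.le, ← rpow_add hR]
    congr 1
    rw [hp']; field_simp; all_goals ring
  calc CNq ^ p' * (R ^ (-(2 * s))) ^ p' * (R ^ N * ∫ x, phiProfile N q x)
      = CNq ^ p' * (∫ x, phiProfile N q x) * ((R ^ (-(2 * s))) ^ p' * R ^ N) := by ring
    _ = CNq ^ p' * (∫ x, phiProfile N q x) * R ^ (-(2 * s * p) / (p - 1) + N) := by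
        rw [hRpow]
end
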